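/- If every finitely generated right R-module has couniserial dimension, then every nonzero right R-module contains a submodule that is both noetherian and uniform. -/

import Mathlib

universe u v w

/-- A module is *uniform* if it is nonzero and any two nonzero submodules intersect
nontrivially. -/
def IsUniformModule (R : Type u) [Ring R] (M : Type v) [AddCommGroup M] [Module R M] : Prop :=
  Nontrivial M ∧ ∀ N₁ N₂ : Submodule R M, N₁ ≠ ⊥ → N₂ ≠ ⊥ → N₁ ⊓ N₂ ≠ ⊥

/-- The classes `ζ_α`, defined by transfinite induction: `ζ_1` is the class of uniform
modules, and for `α > 1`, `M ∈ ζ_α` iff every nonzero submodule `N` of `M` with `N ≇ M`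
lies in `ζ_β` for some `β < α`. -/
def ModuleZeta (R : Type u) [Ring R] (α : Ordinal.{v}) (M : Type v) [AddCommGroup M]
    [Module R M] : Prop :=
  (α = 1 ∧ IsUniformModule R M) ∨
    (1 < α ∧ ∀ N : Submodule R M, N ≠ ⊥ → ¬ Nonempty (N ≃ₗ[R] M) →
      ∃ β, ∃ _ : β < α, ModuleZeta R β N)
termination_by α

/-- A module has couniserial dimension iff it lies in `ζ_α` for some ordinal `α`. -/
def HasCUDim (R : Type u) [Ring R] (M : Type v) [AddCommGroup M] [Module R M] : Prop :=
  ∃ α : Ordinal.{v}, ModuleZeta R α M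

open Classical in
/-- The couniserial dimension of a module: the least `α` with `M ∈ ζ_α`, with the
convention that the zero module has couniserial dimension `0`. -/
noncomputable def cuDim (R : Type u) [Ring R] (M : Type v) [AddCommGroup M] [Module R M] :
    Ordinal.{v} :=
  if Subsingleton M then 0 else sInf {α | ModuleZeta R α M}

/-- A submodule is *essential* if it meets every nonzero submodule nontrivially. -/
def IsEssentialSubmodule (R : Type u) [Ring R] {M : Type v} [AddCommGroup M] [Module R M]
    (N : Submodule R M) : Prop :=
  ∀ K : Submodule R M, K ≠ ⊥ → N ⊓ K ≠ ⊥

/-- A module is *indecomposable* if it is nonzero and is not an (internal) direct sum of two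
nonzero submodules. -/
def IsIndecomposableModule (R : Type u) [Ring R] (M : Type v) [AddCommGroup M]
    [Module R M] : Prop :=
  Nontrivial M ∧ ∀ A B : Submodule R M, IsCompl A B → A = ⊥ ∨ B = ⊥

/-- A module is *coHopfian* if it is not isomorphic to a proper submodule of itself. -/
def IsCoHopfianModule (R : Type u) [Ring R] (M : Type v) [AddCommGroup M] [Module R M] : Prop :=
  ∀ N : Submodule R M, Nonempty (M ≃ₗ[R] N) → N = ⊤

/-- A module is *fully coHopfian* if every submodule is coHopfian. -/
def IsFullyCoHopfianModule (R : Type u) [Ring R] (M : Type v) [AddCommGroup M]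
    [Module R M] : Prop :=
  ∀ N : Submodule R M, IsCoHopfianModule R N

/-- A module `N` has the *cancellation property* if `N ⊕ A ≅ N ⊕ B` implies `A ≅ B`. -/
def HasCancellation (R : Type u) [Ring R] (N : Type v) [AddCommGroup N] [Module R N] : Prop :=
  ∀ (A B : Type v) [AddCommGroup A] [Module R A] [AddCommGroup B] [Module R B],
    Nonempty ((N × A) ≃ₗ[R] (N × B)) → Nonempty (A ≃ₗ[R] B)

/-- A module is *Dedekind finite* if it is not isomorphic to a proper direct summand of
itself. -/
def IsDedekindFiniteModule (R : Type u) [Ring R] (M : Type v) [AddCommGroup M]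
    [Module R M] : Prop :=
  ∀ A B : Submodule R M, IsCompl A B → Nonempty (M ≃ₗ[R] A) → B = ⊥

/-- A ring is *semiprime* if it has no nonzero nilpotent two-sided ideal; equivalently,
`a R a = 0` implies `a = 0`. -/
def IsSemiprimeRing (R : Type u) [Ring R] : Prop :=
  ∀ a : R, (∀ x : R, a * x * a = 0) → a = 0

/-- An ideal is an *annihilator ideal* if it is the annihilator of a subset of the ring. -/
def IsAnnihilatorIdeal (R : Type u) [Ring R] (I : Ideal R) : Prop :=
  ∃ S : Set R, (I : Set R) = {x : R | ∀ s ∈ S, x * s = 0}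

/-- A module has *uniform dimension `n`* if it contains `n` independent uniform submodules
whose direct sum is essential. -/
def HasFiniteUniformDim (R : Type u) [Ring R] (M : Type v) [AddCommGroup M] [Module R M]
    (n : ℕ) : Prop :=
  ∃ U : Fin n → Submodule R M, iSupIndep U ∧ (∀ i, IsUniformModule R (U i)) ∧
    IsEssentialSubmodule R (⨆ i, U i)

/-- A ring is *Goldie* if it has the ascending chain condition on annihilator ideals and
finite uniform dimension as a module over itself. -/
def IsGoldieRing (R : Type u) [Ring R] : Prop :=
  (∀ f : ℕ → Ideal R, (∀ n, IsAnnihilatorIdeal R (f n)) → Monotone f →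
      ∃ n, ∀ k, n ≤ k → f k = f n) ∧
    ∃ n : ℕ, HasFiniteUniformDim R R n

/-!
A nonzero noetherian module contains a uniform submodule: take `C` maximal among the submodules
admitting a nonzero `L` with `C ⊓ L = 0`; if `L` contained nonzero `A, B` with `A ⊓ B = 0`, then
`C ⊕ A ⊋ C` would still miss `B`.

So it suffices to find a nonzero noetherian submodule of `M`. Suppose there is none, and let
`V = xR ≠ 0`. Then `V × V` has no nonzero noetherian submodule either, is finitely generated and not
uniform. Among its nonzero non-uniform submodules pick `W ∈ ζ_δ` with `δ` least; `δ ≠ 1`, so every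
nonzero non-uniform submodule of `W` is isomorphic to `W`. Choose nonzero `A, B ≤ W` with
`A ⊓ B = 0`, a non-finitely generated `D ≤ A`, `0 ≠ a ∈ D` and `0 ≠ b ∈ B`. Then `aR ⊕ bR ≅ W`
makes `W` finitely generated, and `D ⊕ bR ≅ W` then makes `D` finitely generated.
-/

section

open Submodule

variable {R : Type u} [Ring R] {M : Type v} {N : Type w} [AddCommGroup M] [Module R M]
  [AddCommGroup N] [Module R N]

theorem Submodule.comap_subtype_ne_bot {K A : Submodule R M} (hA : A ≤ K) (hA0 : A ≠ ⊥) :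
    comap K.subtype A ≠ ⊥ := by
  intro h
  apply hA0
  rw [← inf_eq_right.mpr hA, ← map_comap_subtype, h, Submodule.map_bot]

theorem Submodule.map_subtype_ne_bot {K : Submodule R M} {A : Submodule R K} (hA0 : A ≠ ⊥) :
    map K.subtype A ≠ ⊥ := fun h =>
  hA0 (map_injective_of_injective K.injective_subtype (h.trans (Submodule.map_bot _).symm))

theorem isUniformModule_submodule_iff {K : Submodule R M} :
    IsUniformModule R K ↔ K ≠ ⊥ ∧ ∀ A ≤ K, ∀ B ≤ K, A ≠ ⊥ → B ≠ ⊥ → A ⊓ B ≠ ⊥ := by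
  rw [IsUniformModule, nontrivial_iff_ne_bot]
  refine and_congr_right fun _ => ⟨fun h A hA B hB hA0 hB0 hAB => ?_, fun h A B hA0 hB0 hAB => ?_⟩
  · refine h _ _ (comap_subtype_ne_bot hA hA0) (comap_subtype_ne_bot hB hB0) ?_
    rw [← comap_inf, hAB, comap_bot, ker_subtype]
  · refine h _ (map_subtype_le K A) _ (map_subtype_le K B) (map_subtype_ne_bot hA0)
      (map_subtype_ne_bot hB0) ?_
    rw [← map_inf _ K.injective_subtype, hAB, Submodule.map_bot]

theorem IsUniformModule.of_equiv (h : IsUniformModule R M) (e : M ≃ₗ[R] N) :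
    IsUniformModule R N := by
  obtain ⟨_, hM⟩ := h
  refine ⟨e.toEquiv.symm.nontrivial, fun N₁ N₂ h₁ h₂ => ?_⟩
  let φ := orderIsoMapComap e.symm
  have key := hM (φ N₁) (φ N₂) (by simpa [φ] using h₁) (by simpa [φ] using h₂)
  rwa [← φ.map_inf, Ne, ← φ.map_bot, φ.apply_eq_iff_eq] at key

theorem not_isUniformModule_top_prod [Nontrivial M] [Nontrivial N] :
    ¬ IsUniformModule R (⊤ : Submodule R (M × N)) := by
  rw [isUniformModule_submodule_iff]
  rintro ⟨-, h⟩
  refine h (prod ⊤ ⊥) le_top (prod ⊥ ⊤) le_top ?_ ?_ ?_ <;>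
    simp [prod_inf_prod, prod_eq_bot_iff]

theorem exists_isUniformModule [IsNoetherian R M] [Nontrivial M] :
    ∃ K : Submodule R M, IsUniformModule R K := by
  by_contra! h
  obtain ⟨C, ⟨L, hL, hCL⟩, hmax⟩ := set_has_maximal_iff_noetherian.mpr ‹_›
    {C | ∃ L : Submodule R M, L ≠ ⊥ ∧ Disjoint C L} ⟨⊥, ⊤, top_ne_bot, disjoint_bot_left⟩
  obtain ⟨A, hAL, B, hBL, hA, hB, hAB⟩ : ∃ A ≤ L, ∃ B ≤ L, A ≠ ⊥ ∧ B ≠ ⊥ ∧ A ⊓ B = ⊥ := by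
    simpa [isUniformModule_submodule_iff, hL] using h L
  -- modularity: `C ⊔ A` is still disjoint from `B ≤ L`
  refine hmax (C ⊔ A) ⟨B, hB, (disjoint_iff.mpr hAB).disjoint_sup_left_of_disjoint_sup_right
    (hCL.mono_right (sup_le hAL hBL))⟩ (left_lt_sup.mpr fun hAC => hA ?_)
  exact le_bot_iff.mp (hCL hAC hAL)

theorem moduleZeta_iff {α : Ordinal.{v}} :
    ModuleZeta R α M ↔ (α = 1 ∧ IsUniformModule R M) ∨
      (1 < α ∧ ∀ K : Submodule R M, K ≠ ⊥ → ¬ Nonempty (K ≃ₗ[R] M) →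
        ∃ β, ∃ _ : β < α, ModuleZeta R β K) := by
  rw [ModuleZeta]

theorem ModuleZeta.of_equiv {α : Ordinal.{v}} {M' : Type v} [AddCommGroup M'] [Module R M']
    (h : ModuleZeta R α M) (e : M ≃ₗ[R] M') : ModuleZeta R α M' := by
  induction α using WellFoundedLT.induction generalizing M M' with
  | _ α ih =>
    rw [moduleZeta_iff] at h ⊢
    refine h.imp (And.imp_right (·.of_equiv e)) (And.imp_right fun hM K hK hKN => ?_)
    let eK : K ≃ₗ[R] K.map (e.symm : M' →ₗ[R] M) := e.symm.submoduleMap K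
    obtain ⟨β, hβ, hζ⟩ := hM _ (by simpa using hK) fun ⟨g⟩ => hKN ⟨(eK.trans g).trans e⟩
    exact ⟨β, hβ, ih β hβ hζ eK.symm⟩

theorem exists_isUniformModule_or_forall_equiv (P : Submodule R M → Prop) {L : Submodule R M}
    (hL : L ≠ ⊥) (hPL : P L) (hLcu : HasCUDim R L) :
    ∃ W : Submodule R M, W ≠ ⊥ ∧ P W ∧
      (IsUniformModule R W ∨ ∀ S ≤ W, S ≠ ⊥ → P S → Nonempty (S ≃ₗ[R] W)) := by
  set ranks := {α : Ordinal.{v} | ∃ W : Submodule R M, W ≠ ⊥ ∧ P W ∧ ModuleZeta R α W}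
  obtain ⟨α, hα⟩ := hLcu
  obtain ⟨W, hW, hPW, hWα⟩ : sInf ranks ∈ ranks := csInf_mem ⟨α, L, hL, hPL, hα⟩
  refine ⟨W, hW, hPW, (moduleZeta_iff.mp hWα).imp And.right fun hWζ S hSW hS hPS => ?_⟩
  let eS : comap W.subtype S ≃ₗ[R] S := comapSubtypeEquivOfLe hSW
  by_contra hSW'
  obtain ⟨β, hβ, hζ⟩ := hWζ.2 _ (comap_subtype_ne_bot hSW hS) fun ⟨g⟩ => hSW' ⟨eS.symm.trans g⟩
  exact (csInf_le' (s := ranks) ⟨S, hS, hPS, hζ.of_equiv eS⟩).not_gt hβ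

theorem Submodule.fg_of_fg_sup_of_disjoint {D B : Submodule R M} (h : (D ⊔ B).FG) (hDB : Disjoint D B) :
    D.FG := by
  have : Module.Finite R (D ⊔ B : Submodule R M) := Module.Finite.iff_fg.mpr h
  have hbot : comap D.subtype D ⊓ comap D.subtype B = ⊥ := by
    rw [← comap_inf, disjoint_iff.mp hDB, comap_bot, ker_subtype]
  exact Module.Finite.iff_fg.mp <| Module.Finite.equiv <|
    (LinearMap.quotientInfEquivSupQuotient D B).symm.trans (quotEquivOfEqBot _ hbot)

theorem not_isNoetherian_of_injective (hM : ∀ K : Submodule R M, K ≠ ⊥ → ¬ IsNoetherian R K)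
    [Nontrivial N] {f : N →ₗ[R] M} (hf : Function.Injective f) : ¬ IsNoetherian R N := fun _ =>
  let e := LinearEquiv.ofInjective f hf
  hM _ (nontrivial_iff_ne_bot.mp e.toEquiv.symm.nontrivial) (isNoetherian_of_linearEquiv e)

theorem not_isNoetherian_submodule_of_injective
    (hM : ∀ K : Submodule R M, K ≠ ⊥ → ¬ IsNoetherian R K) {f : N →ₗ[R] M}
    (hf : Function.Injective f) (K : Submodule R N) (hK : K ≠ ⊥) : ¬ IsNoetherian R K :=
  have := nontrivial_iff_ne_bot.mpr hK
  not_isNoetherian_of_injective hM (f := f ∘ₗ K.subtype) (hf.comp K.injective_subtype)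

theorem not_isNoetherian_submodule_prod (hM : ∀ K : Submodule R M, K ≠ ⊥ → ¬ IsNoetherian R K)
    (hN : ∀ K : Submodule R N, K ≠ ⊥ → ¬ IsNoetherian R K) (C : Submodule R (M × N))
    (hC : C ≠ ⊥) : ¬ IsNoetherian R C := by
  intro hCn
  by_cases hd : Disjoint C (LinearMap.ker (LinearMap.snd R M N))
  · have := nontrivial_iff_ne_bot.mpr hC
    refine not_isNoetherian_of_injective hN (f := LinearMap.snd R M N ∘ₗ C.subtype) ?_ hCn
    rw [← LinearMap.ker_eq_bot, LinearMap.ker_comp, ← disjoint_iff_comap_eq_bot]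
    exact hd
  · set C' := C ⊓ LinearMap.ker (LinearMap.snd R M N)
    have := nontrivial_iff_ne_bot.mpr (show C' ≠ ⊥ by rwa [Ne, ← disjoint_iff])
    refine not_isNoetherian_of_injective hM (f := LinearMap.fst R M N ∘ₗ C'.subtype) ?_
      (isNoetherian_of_le inf_le_left)
    rw [← LinearMap.ker_eq_bot, LinearMap.ker_comp, ← disjoint_iff_comap_eq_bot,
      LinearMap.ker_fst]
    exact LinearMap.disjoint_inl_inr.mono_left (LinearMap.ker_snd R M N ▸ inf_le_right)

theorem not_isUniformModule_sup {A B : Submodule R M} (hA : A ≠ ⊥) (hB : B ≠ ⊥)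
    (hAB : Disjoint A B) : ¬ IsUniformModule R (A ⊔ B : Submodule R M) := by
  rw [isUniformModule_submodule_iff]
  exact fun ⟨_, h⟩ => h A le_sup_left B le_sup_right hA hB (disjoint_iff.mp hAB)

theorem isUniformModule_of_forall_equiv (hM : ∀ K : Submodule R M, K ≠ ⊥ → ¬ IsNoetherian R K)
    {W : Submodule R M} (hW : W ≠ ⊥)
    (hiso : ∀ S ≤ W, S ≠ ⊥ → ¬ IsUniformModule R S → Nonempty (S ≃ₗ[R] W)) :
    IsUniformModule R W := by
  by_contra hnu
  obtain ⟨A, hAW, B, hBW, hA, hB, hAB⟩ : ∃ A ≤ W, ∃ B ≤ W, A ≠ ⊥ ∧ B ≠ ⊥ ∧ A ⊓ B = ⊥ := by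
    simpa [isUniformModule_submodule_iff, hW] using hnu
  obtain ⟨D, hDA, hD⟩ : ∃ D ≤ A, ¬ D.FG := by simpa [isNoetherian_submodule] using hM A hA
  have hD0 : D ≠ ⊥ := by rintro rfl; exact hD fg_bot
  obtain ⟨a, haD, ha⟩ := (Submodule.ne_bot_iff D).mp hD0
  obtain ⟨b, hbB, hb⟩ := (Submodule.ne_bot_iff B).mp hB
  have hbB' : span R {b} ≤ B := (span_singleton_le_iff_mem b B).mpr hbB
  have hdisj : ∀ D' ≤ D, Disjoint D' (span R {b}) := fun D' hD' =>
    (disjoint_iff.mpr hAB).mono (hD'.trans hDA) hbB'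
  have hequiv : ∀ D' ≤ D, D' ≠ ⊥ → Nonempty ((D' ⊔ span R {b} : Submodule R M) ≃ₗ[R] W) :=
    fun D' hD' hD'0 => hiso _ (sup_le (hD'.trans (hDA.trans hAW)) (hbB'.trans hBW))
      (ne_bot_of_le_ne_bot hD'0 le_sup_left)
      (not_isUniformModule_sup hD'0 (by rwa [Ne, span_singleton_eq_bot]) (hdisj D' hD'))
  obtain ⟨e₁⟩ := hequiv _ ((span_singleton_le_iff_mem a D).mpr haD)
    (by rwa [Ne, span_singleton_eq_bot])
  have := Module.Finite.iff_fg.mpr ((fg_span_singleton (R := R) a).sup (fg_span_singleton b))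
  have := Module.Finite.equiv e₁
  obtain ⟨e₂⟩ := hequiv D le_rfl hD0
  exact hD (fg_of_fg_sup_of_disjoint (Module.Finite.iff_fg.mp (Module.Finite.equiv e₂.symm))
    (hdisj D le_rfl))

theorem exists_isNoetherian_ne_bot
    (h : ∀ (M : Type v) [AddCommGroup M] [Module R M], Module.Finite R M → HasCUDim R M)
    [Nontrivial M] : ∃ K : Submodule R M, K ≠ ⊥ ∧ IsNoetherian R K := by
  by_contra! hM
  obtain ⟨x, hx⟩ := exists_ne (0 : M)
  set V := span R {x}
  have := nontrivial_iff_ne_bot.mpr (show V ≠ ⊥ by rwa [Ne, span_singleton_eq_bot])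
  have hV := not_isNoetherian_submodule_of_injective hM V.injective_subtype
  obtain ⟨α, hα⟩ := h (V × V) inferInstance
  obtain ⟨W, hW, hWnu, hWiso⟩ := exists_isUniformModule_or_forall_equiv
    (fun S : Submodule R (V × V) => ¬ IsUniformModule R S) top_ne_bot
    not_isUniformModule_top_prod ⟨α, hα.of_equiv topEquiv.symm⟩
  exact hWnu (isUniformModule_of_forall_equiv (not_isNoetherian_submodule_prod hV hV) hW
    (hWiso.resolve_left hWnu))

end

/-- If every finitely generated `R`-module has couniserial dimension, then
every nonzero `R`-module contains a noetherian uniform submodule. -/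
theorem stmt18 (R : Type u) [Ring R]
    (h : ∀ (M : Type v) [AddCommGroup M] [Module R M], Module.Finite R M → HasCUDim R M) :
    ∀ (M : Type v) [AddCommGroup M] [Module R M], Nontrivial M →
      ∃ N : Submodule R M, N ≠ ⊥ ∧ IsNoetherian R N ∧ IsUniformModule R N := by
  intro M _ _ _
  obtain ⟨N, hN, hNn⟩ := exists_isNoetherian_ne_bot h (M := M)
  have := Submodule.nontrivial_iff_ne_bot.mpr hN
  obtain ⟨K, hK⟩ := exists_isUniformModule (R := R) (M := N)
  let e := Submodule.equivMapOfInjective N.subtype N.injective_subtype K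
  have hKu := hK.of_equiv e
  exact ⟨_, Submodule.nontrivial_iff_ne_bot.mp hKu.1, isNoetherian_of_linearEquiv e, hKu⟩
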